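/- Let $N \geq 3$ be odd, let $a_1,\dots,a_N$ be real numbers, and let $x_1,\dots,x_N$ be pairwise distinct real numbers. Then for every $\epsilon \in \mathbb{R}$, the unordered quantity $I_N$ is invariant under simultaneous position shifts: $I_N(a_1,\dots,a_N, x_1+\epsilon,\dots,x_N+\epsilon) = I_N(a_1,\dots,a_N, x_1,\dots,x_N)$. -/

import Mathlib

/-!
A shift by `ε` leaves every sign, every rank `s_k` and every distance unchanged, so `I_N` changes
by `ε ∑_j a_j² (-1)^{s_j} ∑_{i ≠ j} sgn(x_i - x_j) (-1)^{s_i}`. For distinct positions the ranks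
run through `0, …, N-1`, those `i` with `x_i > x_j` taking exactly the ranks `0, …, s_j - 1`; hence
the inner sum is `∑_{k < s_j} (-1)^k - ∑_{s_j < k < N} (-1)^k`, which vanishes when `N` is odd.
-/

open Finset

/-- The unordered quantity `I_N` for `N` peakons: for amplitudes `a` and
(pairwise distinct) positions `x`, with `s k` the number of indices `l` with
`x l > x k`,
`I_N = ∑_{i ≠ j} ( sgn(xᵢ - xⱼ) (-1)^{sᵢ+sⱼ} aⱼ² xᵢ + (3/2) aᵢ aⱼ e^{-|xᵢ-xⱼ|} )`. -/
noncomputable def INunordered (N : ℕ) (a x : Fin N → ℝ) : ℝ :=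
  ∑ i : Fin N, ∑ j ∈ Finset.univ.erase i,
    (Real.sign (x i - x j)
        * (-1 : ℝ) ^ (((Finset.univ.filter (fun l => x i < x l)).card)
            + ((Finset.univ.filter (fun l => x j < x l)).card))
        * a j ^ 2 * x i
      + (3/2) * a i * a j * Real.exp (-|x i - x j|))

theorem Finset.sum_card_filter_lt_eq_sum_range {ι α M : Type*} [DecidableEq ι] [LinearOrder α]
    [AddCommMonoid M] (f : ℕ → M) {x : ι → α} {s : Finset ι} (hx : Set.InjOn x s) :
    ∑ i ∈ s, f #{l ∈ s | x i < x l} = ∑ k ∈ range #s, f k := by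
  induction s using Finset.induction_on_min_value x with
  | empty => simp
  | insert a s has hmin ih =>
    have hlt : ∀ l ∈ s, x a < x l := fun l hl =>
      (hmin l hl).lt_of_ne fun h => has (hx (mem_insert_self a s) (mem_insert_of_mem hl) h ▸ hl)
    have hrank_a : #{l ∈ insert a s | x a < x l} = #s := by
      rw [filter_insert, if_neg (lt_irrefl _), filter_true_of_mem hlt]
    have hrank : ∀ i ∈ s, #{l ∈ insert a s | x i < x l} = #{l ∈ s | x i < x l} := fun i hi => by
      rw [filter_insert, if_neg (hlt i hi).asymm]
    rw [sum_insert has, card_insert_of_notMem has, sum_range_succ, hrank_a,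
      sum_congr rfl fun i hi => congrArg f (hrank i hi), ih (hx.mono (subset_insert a s)), add_comm]

theorem sign_sub_eq_of_injective {ι : Type*} [DecidableEq ι] {x : ι → ℝ}
    (hx : Function.Injective x) (i j : ι) :
    Real.sign (x i - x j) = 2 * (if x j < x i then 1 else 0) - 1 + if i = j then 1 else 0 := by
  rcases lt_trichotomy (x i) (x j) with h | h | h
  · simp [Real.sign_of_neg (sub_neg.2 h), h.not_gt, ne_of_apply_ne x h.ne]
  · simp [hx h]
  · simp [Real.sign_of_pos (sub_pos.2 h), h, ne_of_apply_ne x h.ne']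
    norm_num

theorem sum_sign_sub_mul_neg_one_pow_card_eq_zero {ι : Type*} [Fintype ι] [DecidableEq ι]
    (hodd : Odd (Fintype.card ι)) {x : ι → ℝ} (hx : Function.Injective x) (j : ι) :
    ∑ i ∈ univ.erase j, Real.sign (x i - x j) * (-1 : ℝ) ^ #{l | x i < x l} = 0 := by
  set g : ι → ℝ := fun i => (-1 : ℝ) ^ #{l | x i < x l}
  have hupper : ∑ i with x j < x i, g i = ∑ k ∈ range #{l | x j < x l}, (-1 : ℝ) ^ k := by
    rw [← sum_card_filter_lt_eq_sum_range (s := {l | x j < x l}) _ hx.injOn]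
    refine sum_congr rfl fun i hi => ?_
    have hji : x j < x i := (mem_filter.1 hi).2
    rw [filter_filter, filter_congr fun l _ => and_iff_right_of_imp hji.trans]
  have hall : ∑ i, g i = 1 := by
    rw [← card_univ] at hodd
    rw [sum_card_filter_lt_eq_sum_range _ hx.injOn, neg_one_geom_sum,
      if_neg (Nat.not_even_iff_odd.2 hodd)]
  calc ∑ i ∈ univ.erase j, Real.sign (x i - x j) * g i
      = ∑ i, Real.sign (x i - x j) * g i := sum_erase _ (by simp)
    _ = 2 * ∑ i with x j < x i, g i - ∑ i, g i + g j := by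
      simp only [sign_sub_eq_of_injective hx, add_mul, sub_mul, ite_mul, one_mul, zero_mul,
        sum_add_distrib, sum_sub_distrib, mul_assoc, ← mul_sum, sum_ite_eq', mem_univ, if_true,
        sum_filter]
    _ = 0 := by
      rw [hupper, hall, neg_one_geom_sum]
      rcases Nat.even_or_odd #{l | x j < x l} with h | h
      · simp [g, h, h.neg_one_pow]
      · simp [g, Nat.not_even_iff_odd.2 h, h.neg_one_pow]
        norm_num

theorem INunordered_add_const (N : ℕ) (a x : Fin N → ℝ) (ε : ℝ) :
    INunordered N a (fun i => x i + ε) = INunordered N a x +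
      ε * ∑ j, a j ^ 2 * (-1 : ℝ) ^ #{l | x j < x l} *
        ∑ i ∈ univ.erase j, Real.sign (x i - x j) * (-1 : ℝ) ^ #{l | x i < x l} := by
  set A : Fin N → Fin N → ℝ := fun i j =>
    Real.sign (x i - x j) * (-1 : ℝ) ^ (#{l | x i < x l} + #{l | x j < x l}) * a j ^ 2
  have hA : ∀ i, A i i = 0 := fun i => by simp [A]
  have hswap : ∑ i, ∑ j ∈ univ.erase i, A i j = ∑ j, ∑ i ∈ univ.erase j, A i j := by
    simp only [fun i => sum_erase univ (f := A i) (hA i),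
      fun j => sum_erase univ (f := fun i => A i j) (hA j)]
    exact sum_comm
  have hε : ∑ i, ∑ j ∈ univ.erase i, A i j * ε = ε * ∑ j, a j ^ 2 * (-1 : ℝ) ^ #{l | x j < x l} *
      ∑ i ∈ univ.erase j, Real.sign (x i - x j) * (-1 : ℝ) ^ #{l | x i < x l} := by
    simp only [← sum_mul, hswap, mul_sum]
    rw [sum_mul]
    refine sum_congr rfl fun j _ => ?_
    rw [sum_mul]
    refine sum_congr rfl fun i _ => ?_
    simp only [A, pow_add]
    ring
  simp only [INunordered, add_sub_add_right_eq_sub, add_lt_add_iff_right, mul_add, sum_add_distrib,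
    ← hε, A]
  ring

theorem INunordered_shift_invariant_of_odd
    (N : ℕ) (hNodd : Odd N) (a x : Fin N → ℝ)
    (hdist : Function.Injective x) (ε : ℝ) :
    INunordered N a (fun i => x i + ε) = INunordered N a x := by
  have hodd : Odd (Fintype.card (Fin N)) := by rwa [Fintype.card_fin]
  simp [INunordered_add_const, sum_sign_sub_mul_neg_one_pow_card_eq_zero hodd hdist]
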